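/- arXiv:1107.1595 — 2 statements merged into one kernel-verified Lean document; each statement's English description precedes it below -/
import Mathlib

section
/- Let I ⊆ ℝ be an open interval and let u, E, B : I × ℝ³ → ℝ³ and ρ : I × ℝ³ → ℝ be C² functions satisfying, pointwise on I × ℝ³, the equations ∂_t u + (u·∇)u = −c_s² ρ∇ρ − E − u×B and ∂_t B + ∇×E = 0 (where c_s > 0 is a constant). Then the quantity B − ∇×u satisfies the pointwise identity ∂_t (B − ∇×u) = ∇×( u × (B − ∇×u) ) on I × ℝ³. (In particular, the constraint B = ∇×u is formally conserved by the flow.) -/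
noncomputable section

open MeasureTheory Real Filter
open scoped ENNReal NNReal RealInnerProductSpace

/-- Physical / frequency space `ℝ³`. -/
abbrev E3 : Type := EuclideanSpace ℝ (Fin 3)

/-- The vector of `ℝ³` with the three given coordinates. -/
def vec3 (a b c : ℝ) : E3 := (WithLp.equiv 2 (Fin 3 → ℝ)).symm ![a, b, c]

/-- Partial derivative in the `i`-th coordinate direction. -/
def pd {F : Type*} [NormedAddCommGroup F] [NormedSpace ℝ F] (i : Fin 3) (f : E3 → F) (x : E3) :
    F :=
  fderiv ℝ f x (EuclideanSpace.single i 1)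

/-- Divergence of a vector field on `ℝ³`. -/
def divg (v : E3 → E3) (x : E3) : ℝ := ∑ i, pd i (fun y => v y i) x

/-- Curl of a vector field on `ℝ³`. -/
def curl (v : E3 → E3) (x : E3) : E3 :=
  vec3 (pd 1 (fun y => v y 2) x - pd 2 (fun y => v y 1) x)
       (pd 2 (fun y => v y 0) x - pd 0 (fun y => v y 2) x)
       (pd 0 (fun y => v y 1) x - pd 1 (fun y => v y 0) x)

/-- Gradient of a scalar function on `ℝ³`. -/
def grad (f : E3 → ℝ) (x : E3) : E3 := vec3 (pd 0 f x) (pd 1 f x) (pd 2 f x)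

/-- Cross product on `ℝ³`. -/
def cross (a b : E3) : E3 :=
  vec3 (a 1 * b 2 - a 2 * b 1) (a 2 * b 0 - a 0 * b 2) (a 0 * b 1 - a 1 * b 0)

/-- Componentwise Laplacian. -/
def lap {F : Type*} [NormedAddCommGroup F] [NormedSpace ℝ F] (f : E3 → F) (x : E3) : F :=
  ∑ i, pd i (fun y => pd i f y) x

/-- Japanese bracket `⟨ξ⟩_a = √(1 + a²|ξ|²)`. -/
def jap (a : ℝ) (ξ : E3) : ℝ := Real.sqrt (1 + a ^ 2 * ‖ξ‖ ^ 2)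

/-- Japanese bracket of a real number, `⟨t⟩ = √(1 + t²)`. -/
def japT (t : ℝ) : ℝ := Real.sqrt (1 + t ^ 2)

/-!
For `C²` fields the time derivative commutes with the curl, so `∂ₜ(∇×u) = ∇×(∂ₜu)`. Since
`(u·∇)u = ∇(|u|²/2) - u×(∇×u)` and `c_s²ρ∇ρ = ∇(c_s²ρ²/2)`, and the curl of a gradient vanishes,
the momentum equation gives `∂ₜ(∇×u) = ∇×(u×(∇×u)) - ∇×E - ∇×(u×B)`. Subtracting this from
Faraday's law `∂ₜB = -∇×E`, the electric field cancels, leaving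
`∇×(u×B) - ∇×(u×(∇×u)) = ∇×(u×(B - ∇×u))`.
-/

@[simp] lemma vec3_apply_zero (a b c : ℝ) : vec3 a b c 0 = a := rfl
@[simp] lemma vec3_apply_one (a b c : ℝ) : vec3 a b c 1 = b := rfl
@[simp] lemma vec3_apply_two (a b c : ℝ) : vec3 a b c 2 = c := rfl

lemma vec3_sub (a b c a' b' c' : ℝ) :
    vec3 a b c - vec3 a' b' c' = vec3 (a - a') (b - b') (c - c') := by
  ext k; fin_cases k <;> rfl

lemma neg_vec3 (a b c : ℝ) : -vec3 a b c = vec3 (-a) (-b) (-c) := by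
  ext k; fin_cases k <;> rfl

lemma smul_vec3 (r a b c : ℝ) : r • vec3 a b c = vec3 (r * a) (r * b) (r * c) := by
  ext k; fin_cases k <;> rfl

section Vec3Calculus
variable {H : Type*} [NormedAddCommGroup H] [NormedSpace ℝ H]

lemma DifferentiableAt.vec3 {a b c : H → ℝ} {x : H} (ha : DifferentiableAt ℝ a x)
    (hb : DifferentiableAt ℝ b x) (hc : DifferentiableAt ℝ c x) :
    DifferentiableAt ℝ (fun y => vec3 (a y) (b y) (c y)) x := by
  rw [differentiableAt_euclidean]
  intro k; fin_cases k <;> assumption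

lemma HasDerivAt.vec3 {a b c : ℝ → ℝ} {a' b' c' t : ℝ} (ha : HasDerivAt a a' t)
    (hb : HasDerivAt b b' t) (hc : HasDerivAt c c' t) :
    HasDerivAt (fun s => vec3 (a s) (b s) (c s)) (vec3 a' b' c') t := by
  have h : HasDerivAt (fun s => ![a s, b s, c s]) ![a', b', c'] t := by
    rw [hasDerivAt_pi]; intro k; fin_cases k <;> assumption
  exact (PiLp.continuousLinearEquiv 2 ℝ (fun _ : Fin 3 => ℝ)).symm.hasFDerivAt.comp_hasDerivAt t h

end Vec3Calculus

lemma cross_sub (a b c : E3) : cross a (b - c) = cross a b - cross a c := by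
  simp only [cross, vec3_sub, PiLp.sub_apply]; congr 1 <;> ring

lemma DifferentiableAt.cross {f g : E3 → E3} {x : E3} (hf : DifferentiableAt ℝ f x)
    (hg : DifferentiableAt ℝ g x) : DifferentiableAt ℝ (fun y => cross (f y) (g y)) x := by
  rw [differentiableAt_euclidean] at hf hg
  exact .vec3 (((hf 1).mul (hg 2)).sub ((hf 2).mul (hg 1)))
    (((hf 2).mul (hg 0)).sub ((hf 0).mul (hg 2))) (((hf 0).mul (hg 1)).sub ((hf 1).mul (hg 0)))

section PartialDerivatives
variable {F : Type*} [NormedAddCommGroup F] [NormedSpace ℝ F] {f g : E3 → F} {x : E3} {i : Fin 3}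

lemma pd_sub (hf : DifferentiableAt ℝ f x) (hg : DifferentiableAt ℝ g x) :
    pd i (fun y => f y - g y) x = pd i f x - pd i g x := by
  simp [pd, fderiv_fun_sub hf hg]

lemma pd_neg : pd i (fun y => -f y) x = -pd i f x := by
  simp [pd]

lemma pd_const_mul {φ : E3 → ℝ} (hφ : DifferentiableAt ℝ φ x) (c : ℝ) :
    pd i (fun y => c * φ y) x = c * pd i φ x := by
  simp [pd, fderiv_const_mul hφ c]

lemma pd_mul {φ ψ : E3 → ℝ} (hφ : DifferentiableAt ℝ φ x) (hψ : DifferentiableAt ℝ ψ x) :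
    pd i (fun y => φ y * ψ y) x = pd i φ x * ψ x + φ x * pd i ψ x := by
  simp only [pd, fderiv_fun_mul hφ hψ, add_apply, smul_apply, smul_eq_mul]
  ring

lemma pd_apply {v : E3 → E3} (hv : DifferentiableAt ℝ v x) (k : Fin 3) :
    pd i (fun y => v y k) x = pd i v x k := by
  have h : HasFDerivAt (fun y => v y k)
      ((EuclideanSpace.proj (𝕜 := ℝ) k).comp (fderiv ℝ v x)) x :=
    (EuclideanSpace.proj (𝕜 := ℝ) k).hasFDerivAt.comp x hv.hasFDerivAt
  rw [pd, h.fderiv]; rfl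

end PartialDerivatives

section SecondDerivatives
variable {H F : Type*} [NormedAddCommGroup H] [NormedSpace ℝ H] [NormedAddCommGroup F]
  [NormedSpace ℝ F] {f : H → F} {p : H}

lemma fderiv_fderiv_apply (hf : DifferentiableAt ℝ (fderiv ℝ f) p) (v w : H) :
    fderiv ℝ (fun q => fderiv ℝ f q v) p w = fderiv ℝ (fderiv ℝ f) p w v := by
  simp [fderiv_clm_apply hf (differentiableAt_const v)]

lemma ContDiffAt.differentiableAt_fderiv_apply (hf : ContDiffAt ℝ 2 f p) (v : H) :
    DifferentiableAt ℝ (fun q => fderiv ℝ f q v) p :=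
  ((hf.fderiv_right le_rfl).differentiableAt one_ne_zero).clm_apply (differentiableAt_const v)

lemma ContDiffAt.fderiv_fderiv_apply_comm (hf : ContDiffAt ℝ 2 f p) (v w : H) :
    fderiv ℝ (fun q => fderiv ℝ f q v) p w = fderiv ℝ (fun q => fderiv ℝ f q w) p v := by
  have hdf := (hf.fderiv_right le_rfl).differentiableAt one_ne_zero
  rw [fderiv_fderiv_apply hdf, fderiv_fderiv_apply hdf,
    (hf.isSymmSndFDerivAt (by simp [minSmoothness_of_isRCLikeNormedField])).eq]

end SecondDerivatives

lemma ContDiffAt.pd_comm {F : Type*} [NormedAddCommGroup F] [NormedSpace ℝ F] {f : E3 → F}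
    {x : E3} (hf : ContDiffAt ℝ 2 f x) (i j : Fin 3) :
    pd i (fun y => pd j f y) x = pd j (fun y => pd i f y) x :=
  hf.fderiv_fderiv_apply_comm _ _

lemma ContDiffAt.differentiableAt_pd {F : Type*} [NormedAddCommGroup F] [NormedSpace ℝ F]
    {f : E3 → F} {x : E3} (hf : ContDiffAt ℝ 2 f x) (i : Fin 3) :
    DifferentiableAt ℝ (fun y => pd i f y) x :=
  hf.differentiableAt_fderiv_apply _

section Curl
variable {f g : E3 → E3} {x : E3}

lemma curl_sub (hf : DifferentiableAt ℝ f x) (hg : DifferentiableAt ℝ g x) :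
    curl (fun y => f y - g y) x = curl f x - curl g x := by
  rw [differentiableAt_euclidean] at hf hg
  simp only [curl, PiLp.sub_apply, vec3_sub, pd_sub (hf _) (hg _)]
  congr 1 <;> ring

lemma curl_neg : curl (fun y => -f y) x = -curl f x := by
  simp only [curl, PiLp.neg_apply, pd_neg, neg_vec3]
  congr 1 <;> ring

lemma curl_grad {φ : E3 → ℝ} (hφ : ContDiffAt ℝ 2 φ x) : curl (grad φ) x = 0 := by
  simp only [curl, grad, vec3_apply_zero, vec3_apply_one, vec3_apply_two, hφ.pd_comm 1 2,
    hφ.pd_comm 2 0, hφ.pd_comm 0 1, sub_self]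
  ext k; fin_cases k <;> rfl

end Curl

lemma ContDiffAt.differentiableAt_grad {φ : E3 → ℝ} {x : E3} (hφ : ContDiffAt ℝ 2 φ x) :
    DifferentiableAt ℝ (grad φ) x :=
  .vec3 (hφ.differentiableAt_pd 0) (hφ.differentiableAt_pd 1) (hφ.differentiableAt_pd 2)

lemma ContDiffAt.differentiableAt_curl {v : E3 → E3} {x : E3} (hv : ContDiffAt ℝ 2 v x) :
    DifferentiableAt ℝ (curl v) x := by
  rw [contDiffAt_euclidean] at hv
  exact .vec3 (((hv 2).differentiableAt_pd 1).sub ((hv 1).differentiableAt_pd 2))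
    (((hv 0).differentiableAt_pd 2).sub ((hv 2).differentiableAt_pd 0))
    (((hv 1).differentiableAt_pd 0).sub ((hv 0).differentiableAt_pd 1))

lemma curl_smul_grad_self {φ : E3 → ℝ} (hφ : ContDiff ℝ 2 φ) (a : ℝ) (x : E3) :
    curl (fun y => (a * φ y) • grad φ y) x = 0 := by
  have hgrad : (fun y => (a * φ y) • grad φ y) = grad (fun y => a / 2 * (φ y * φ y)) := by
    funext y
    have hφy := (hφ.differentiable two_ne_zero) y
    have hφφ : DifferentiableAt ℝ (fun y => φ y * φ y) y := hφy.mul hφy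
    simp only [grad, smul_vec3, pd_const_mul hφφ, pd_mul hφy hφy]
    congr 1 <;> ring
  rw [hgrad]
  exact curl_grad (by fun_prop)

lemma fderiv_apply_self_eq_grad_sub_cross {u : E3 → E3} {x : E3} (hu : DifferentiableAt ℝ u x) :
    fderiv ℝ u x (u x) = grad (fun y => ‖u y‖ ^ 2 / 2) x - cross (u x) (curl u x) := by
  have hgrad : ∀ i, pd i (fun y => ‖u y‖ ^ 2 / 2) x = ⟪u x, pd i u x⟫ := by
    intro i
    simp_rw [div_eq_mul_inv]
    rw [pd, ((hu.hasFDerivAt.norm_sq).mul_const (2⁻¹ : ℝ)).fderiv]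
    simp [pd]
  have hlin : fderiv ℝ u x (u x) = u x 0 • pd 0 u x + u x 1 • pd 1 u x + u x 2 • pd 2 u x := by
    have hux : u x = ∑ j, u x j • EuclideanSpace.single j (1 : ℝ) := by
      ext k; fin_cases k <;> simp [Fin.sum_univ_three]
    conv_lhs => rw [hux]
    simp [Fin.sum_univ_three, pd]
  ext k; fin_cases k <;>
    simp only [Fin.zero_eta, Fin.mk_one, Fin.reduceFinMk, hlin, grad, hgrad, curl, pd_apply hu,
      cross, vec3_apply_zero, vec3_apply_one, vec3_apply_two, PiLp.add_apply, PiLp.sub_apply,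
      PiLp.smul_apply, smul_eq_mul, PiLp.inner_apply, RCLike.inner_apply, ringHom_apply,
      Fin.sum_univ_three] <;> ring

lemma curl_fderiv_apply_self {u : E3 → E3} (hu : ContDiff ℝ 2 u) (x : E3) :
    curl (fun y => fderiv ℝ u y (u y)) x = -curl (fun y => cross (u y) (curl u y)) x := by
  have hux := hu.contDiffAt (x := x)
  have henergy : ContDiff ℝ 2 fun y => ‖u y‖ ^ 2 / 2 := (hu.norm_sq ℝ).div_const 2
  rw [funext fun y => fderiv_apply_self_eq_grad_sub_cross ((hu.differentiable two_ne_zero) y),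
    curl_sub henergy.contDiffAt.differentiableAt_grad
      ((hux.differentiableAt two_ne_zero).cross hux.differentiableAt_curl),
    curl_grad henergy.contDiffAt, zero_sub]

section Slices
variable {F : Type*} [NormedAddCommGroup F] [NormedSpace ℝ F]

lemma hasDerivAt_comp_prodMk_left {K : ℝ × E3 → F} {t : ℝ} {x : E3}
    (hK : DifferentiableAt ℝ K (t, x)) :
    HasDerivAt (fun s => K (s, x)) (fderiv ℝ K (t, x) (1, 0)) t :=
  hK.hasFDerivAt.comp_hasDerivAt t ((hasDerivAt_id t).prodMk (hasDerivAt_const t x))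

lemma pd_comp_prodMk_right {K : ℝ × E3 → F} {t : ℝ} {x : E3}
    (hK : DifferentiableAt ℝ K (t, x)) (i : Fin 3) :
    pd i (fun y => K (t, y)) x = fderiv ℝ K (t, x) (0, EuclideanSpace.single i 1) := by
  have h : HasFDerivAt (fun y : E3 => K (t, y))
      ((fderiv ℝ K (t, x)).comp ((0 : E3 →L[ℝ] ℝ).prod (ContinuousLinearMap.id ℝ E3))) x :=
    hK.hasFDerivAt.comp x ((hasFDerivAt_const t x).prodMk (hasFDerivAt_id x))
  rw [pd, h.fderiv]; rfl

variable {n : WithTop ℕ∞} {I : Set ℝ} {G : ℝ → E3 → F}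

lemma ContDiffOn.contDiffAt_of_mem_prod_univ
    (hG : ContDiffOn ℝ n (fun p : ℝ × E3 => G p.1 p.2) (I ×ˢ Set.univ)) (hI : IsOpen I)
    {t : ℝ} (ht : t ∈ I) (x : E3) : ContDiffAt ℝ n (fun p : ℝ × E3 => G p.1 p.2) (t, x) :=
  hG.contDiffAt ((hI.prod isOpen_univ).mem_nhds (by simp [ht]))

lemma ContDiffOn.contDiff_slice
    (hG : ContDiffOn ℝ n (fun p : ℝ × E3 => G p.1 p.2) (I ×ˢ Set.univ)) (hI : IsOpen I)
    {t : ℝ} (ht : t ∈ I) : ContDiff ℝ n (G t) :=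
  contDiff_iff_contDiffAt.2 fun x =>
    (hG.contDiffAt_of_mem_prod_univ hI ht x).comp x (contDiffAt_const.prodMk contDiffAt_id)

lemma ContDiffOn.differentiableAt_slice
    (hG : ContDiffOn ℝ n (fun p : ℝ × E3 => G p.1 p.2) (I ×ˢ Set.univ)) (hn : n ≠ 0)
    (hI : IsOpen I) {t : ℝ} (ht : t ∈ I) (x : E3) : DifferentiableAt ℝ (fun s => G s x) t :=
  (hasDerivAt_comp_prodMk_left
    ((hG.contDiffAt_of_mem_prod_univ hI ht x).differentiableAt hn)).differentiableAt

lemma ContDiffOn.hasDerivAt_pd_slice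
    (hG : ContDiffOn ℝ 2 (fun p : ℝ × E3 => G p.1 p.2) (I ×ˢ Set.univ)) (hI : IsOpen I)
    {t : ℝ} (ht : t ∈ I) (x : E3) (i : Fin 3) :
    HasDerivAt (fun s => pd i (G s) x) (pd i (fun y => deriv (fun s => G s y) t) x) t := by
  set K : ℝ × E3 → F := fun p => G p.1 p.2
  have hK : ∀ s ∈ I, ∀ y, ContDiffAt ℝ 2 K (s, y) := fun s hs =>
    hG.contDiffAt_of_mem_prod_univ hI hs
  have htime : (fun y => deriv (fun s => G s y) t) = fun y => fderiv ℝ K (t, y) (1, 0) :=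
    funext fun y => (hasDerivAt_comp_prodMk_left ((hK t ht y).differentiableAt two_ne_zero)).deriv
  rw [htime, pd_comp_prodMk_right ((hK t ht x).differentiableAt_fderiv_apply _),
    (hK t ht x).fderiv_fderiv_apply_comm]
  refine (hasDerivAt_comp_prodMk_left
    ((hK t ht x).differentiableAt_fderiv_apply _)).congr_of_eventuallyEq ?_
  filter_upwards [hI.mem_nhds ht] with s hs
  exact pd_comp_prodMk_right ((hK s hs x).differentiableAt two_ne_zero) i

end Slices

lemma ContDiffOn.hasDerivAt_curl_slice {I : Set ℝ} {u : ℝ → E3 → E3}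
    (hu : ContDiffOn ℝ 2 (fun p : ℝ × E3 => u p.1 p.2) (I ×ˢ Set.univ)) (hI : IsOpen I)
    {t : ℝ} (ht : t ∈ I) (x : E3) :
    HasDerivAt (fun s => curl (u s) x) (curl (fun y => deriv (fun s => u s y) t) x) t := by
  have hcomp : ∀ k, ContDiffOn ℝ 2 (fun p : ℝ × E3 => u p.1 p.2 k) (I ×ˢ Set.univ) :=
    fun k => (EuclideanSpace.proj (𝕜 := ℝ) k).contDiff.comp_contDiffOn hu
  have hderiv : ∀ k i, HasDerivAt (fun s => pd i (fun y => u s y k) x)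
      (pd i (fun y => deriv (fun s => u s y) t k) x) t := by
    intro k i
    have hproj : ∀ y, deriv (fun s => u s y k) t = deriv (fun s => u s y) t k := fun y =>
      ((EuclideanSpace.proj (𝕜 := ℝ) k).hasFDerivAt.comp_hasDerivAt t
        (hu.differentiableAt_slice two_ne_zero hI ht y).hasDerivAt).deriv
    simpa only [hproj] using (hcomp k).hasDerivAt_pd_slice (G := fun s y => u s y k) hI ht x i
  exact .vec3 ((hderiv 2 1).sub (hderiv 1 2)) ((hderiv 0 2).sub (hderiv 2 0))
    ((hderiv 1 0).sub (hderiv 0 1))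

theorem statement2_general (c_s : ℝ)
    (I : Set ℝ) (hIopen : IsOpen I)
    (u E B : ℝ → E3 → E3) (ρ : ℝ → E3 → ℝ)
    (hu : ContDiffOn ℝ 2 (fun p : ℝ × E3 => u p.1 p.2) (I ×ˢ Set.univ))
    (hE : ContDiffOn ℝ 2 (fun p : ℝ × E3 => E p.1 p.2) (I ×ˢ Set.univ))
    (hB : ContDiffOn ℝ 2 (fun p : ℝ × E3 => B p.1 p.2) (I ×ˢ Set.univ))
    (hρ : ContDiffOn ℝ 2 (fun p : ℝ × E3 => ρ p.1 p.2) (I ×ˢ Set.univ))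
    (heq1 : ∀ t ∈ I, ∀ x : E3,
      deriv (fun s => u s x) t + fderiv ℝ (u t) x (u t x) =
        -((c_s ^ 2 * ρ t x) • grad (ρ t) x) - E t x - cross (u t x) (B t x))
    (heq2 : ∀ t ∈ I, ∀ x : E3,
      deriv (fun s => B s x) t + curl (E t) x = 0) :
    ∀ t ∈ I, ∀ x : E3,
      deriv (fun s => B s x - curl (u s) x) t =
        curl (fun y => cross (u t y) (B t y - curl (u t) y)) x := by
  intro t ht x
  have hut := hu.contDiff_slice hIopen ht
  have hρt := hρ.contDiff_slice hIopen ht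
  have hEx := ((hE.contDiff_slice hIopen ht).differentiable two_ne_zero) x
  have hBx := ((hB.contDiff_slice hIopen ht).differentiable two_ne_zero) x
  have hux := (hut.differentiable two_ne_zero) x
  have hdudt : (fun y => deriv (fun s => u s y) t) = fun y => -((c_s ^ 2 * ρ t y) • grad (ρ t) y)
      - E t y - cross (u t y) (B t y) - fderiv ℝ (u t) y (u t y) :=
    funext fun y => eq_sub_of_add_eq (heq1 t ht y)
  have hdBdt : HasDerivAt (fun s => B s x) (-curl (E t) x) t := by
    rw [← eq_neg_of_add_eq_zero_left (heq2 t ht x)]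
    exact (hB.differentiableAt_slice two_ne_zero hIopen ht x).hasDerivAt
  have hpressure : DifferentiableAt ℝ (fun y => -((c_s ^ 2 * ρ t y) • grad (ρ t) y)) x :=
    ((((hρt.differentiable two_ne_zero) x).const_mul _).smul
      hρt.contDiffAt.differentiableAt_grad).neg
  have hconv : DifferentiableAt ℝ (fun y => fderiv ℝ (u t) y (u t y)) x :=
    ((hut.contDiffAt.fderiv_right le_rfl).differentiableAt one_ne_zero).clm_apply hux
  rw [(hdBdt.fun_sub (hu.hasDerivAt_curl_slice hIopen ht x)).deriv, hdudt,
    curl_sub (((hpressure.fun_sub hEx).fun_sub (hux.cross hBx))) hconv,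
    curl_sub (hpressure.fun_sub hEx) (hux.cross hBx), curl_sub hpressure hEx, curl_neg,
    curl_smul_grad_self hρt, curl_fderiv_apply_self hut]
  simp_rw [cross_sub]
  rw [curl_sub (hux.cross hBx) (hux.cross hut.contDiffAt.differentiableAt_curl)]
  abel

/-- The quantity `B - ∇×u` satisfies a transport-type identity; in
particular the constraint `B = ∇×u` is formally conserved by the flow. -/
theorem statement2 (c_s : ℝ) (hc : 0 < c_s)
    (I : Set ℝ) (hIopen : IsOpen I) (hIconn : I.OrdConnected)
    (u E B : ℝ → E3 → E3) (ρ : ℝ → E3 → ℝ)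
    (hu : ContDiffOn ℝ 2 (fun p : ℝ × E3 => u p.1 p.2) (I ×ˢ Set.univ))
    (hE : ContDiffOn ℝ 2 (fun p : ℝ × E3 => E p.1 p.2) (I ×ˢ Set.univ))
    (hB : ContDiffOn ℝ 2 (fun p : ℝ × E3 => B p.1 p.2) (I ×ˢ Set.univ))
    (hρ : ContDiffOn ℝ 2 (fun p : ℝ × E3 => ρ p.1 p.2) (I ×ˢ Set.univ))
    (heq1 : ∀ t ∈ I, ∀ x : E3,
      deriv (fun s => u s x) t + fderiv ℝ (u t) x (u t x) =
        -((c_s ^ 2 * ρ t x) • grad (ρ t) x) - E t x - cross (u t x) (B t x))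
    (heq2 : ∀ t ∈ I, ∀ x : E3,
      deriv (fun s => B s x) t + curl (E t) x = 0) :
    ∀ t ∈ I, ∀ x : E3,
      deriv (fun s => B s x - curl (u s) x) t =
        curl (fun y => cross (u t y) (B t y - curl (u t) y)) x :=
  statement2_general c_s I hIopen u E B ρ hu hE hB hρ heq1 heq2
end
end

section
/- Fix 0 < c_s < 1. For sign choices ε₁, ε₂ ∈ {+1, −1} and indices k, ℓ, m ∈ {1, c_s}, let φ^{ε₁,ε₂}_{k,ℓ,m}(ξ,η) = ⟨ξ⟩_k + ε₁⟨η⟩_ℓ + ε₂⟨ξ−η⟩_m on ℝ³×ℝ³, and let R be the union, over all such choices, of the sets {(ξ,η) ∈ ℝ³×ℝ³ : φ^{ε₁,ε₂}_{k,ℓ,m}(ξ,η) = 0 and ∇_η φ^{ε₁,ε₂}_{k,ℓ,m}(ξ,η) = 0}. Then R is a bounded (indeed compact) subset of ℝ³×ℝ³; in particular there exists a radius C_R − 1 such that R is contained in the ball of that radius centered at the origin. -/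
noncomputable section

open MeasureTheory Real Filter
open scoped ENNReal NNReal RealInnerProductSpace

/-- The phase `φ(ξ,η) = ⟨ξ⟩_k + ε₁⟨η⟩_l + ε₂⟨ξ-η⟩_m`. -/
def phase (k l m e₁ e₂ : ℝ) (ξ η : E3) : ℝ :=
  jap k ξ + e₁ * jap l η + e₂ * jap m (ξ - η)

/-- The set of all space-time resonances: points where some phase
`φ^{ε₁,ε₂}_{k,l,m}` and its `η`-gradient both vanish. -/
def ResSet (c_s : ℝ) : Set (E3 × E3) :=
  {p | ∃ e₁ e₂ k l m : ℝ, (e₁ = 1 ∨ e₁ = -1) ∧ (e₂ = 1 ∨ e₂ = -1) ∧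
    (k = 1 ∨ k = c_s) ∧ (l = 1 ∨ l = c_s) ∧ (m = 1 ∨ m = c_s) ∧
    phase k l m e₁ e₂ p.1 p.2 = 0 ∧
    fderiv ℝ (fun η => phase k l m e₁ e₂ p.1 η) p.2 = 0}

/-!
The `η`-gradient of the phase vanishes iff `ε₁ ∇⟨η⟩_l = ε₂ ∇⟨ξ - η⟩_m`. Taking norms equates the
group speeds `l²|η|/⟨η⟩_l` and `m²|ξ - η|/⟨ξ - η⟩_m`, and for `ε₁ = ε₂` the vectors `η` and `ξ - η`
point the same way, so `|ξ| = |η| + |ξ - η|`. Equal indices then force `|η| = |ξ - η|`; unequal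
ones bound the frequency of the fast wave, since the slow one moves at speed `< c_s`.
The time resonance makes one bracket the sum of the other two. As `⟨·⟩` is 1-Lipschitz this is
impossible when the lone bracket has the smallest index, and in the remaining cases
`|x| < ⟨x⟩ ≤ 1 + |x|` bounds the remaining frequency. Closedness is clear: the resonant set is a
finite union of zero sets of continuous maps.
-/

lemma jap_eq_japT (a : ℝ) (x : E3) : jap a x = japT (a * ‖x‖) := by
  rw [jap, japT, mul_pow]

lemma sq_japT (t : ℝ) : japT t ^ 2 = 1 + t ^ 2 := Real.sq_sqrt (by positivity)

lemma japT_pos (t : ℝ) : 0 < japT t := Real.sqrt_pos.2 (by positivity)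

lemma one_le_japT (t : ℝ) : 1 ≤ japT t := Real.one_le_sqrt.2 (by nlinarith [sq_nonneg t])

lemma lt_japT (t : ℝ) : t < japT t :=
  (le_abs_self t).trans_lt <| (Real.lt_sqrt (abs_nonneg t)).2 (by rw [sq_abs]; linarith)

lemma japT_le_one_add {t : ℝ} (ht : 0 ≤ t) : japT t ≤ 1 + t :=
  Real.sqrt_le_iff.2 ⟨by positivity, by nlinarith⟩

lemma japT_le_japT {s t : ℝ} (hs : 0 ≤ s) (hst : s ≤ t) : japT s ≤ japT t :=
  Real.sqrt_le_sqrt (by nlinarith)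

lemma japT_add_le (s : ℝ) {t : ℝ} (ht : 0 ≤ t) : japT (s + t) ≤ japT s + t :=
  Real.sqrt_le_iff.2 ⟨by linarith [japT_pos s], by nlinarith [sq_japT s, lt_japT s]⟩

lemma japT_mul_lt_add {a b d x y z : ℝ} (ha : 0 ≤ a) (hab : a ≤ b) (had : a ≤ d)
    (hx : 0 ≤ x) (hy : 0 ≤ y) (hz : 0 ≤ z) (hxyz : x ≤ y + z) :
    japT (a * x) < japT (b * y) + japT (d * z) :=
  calc japT (a * x) ≤ japT (a * y + a * z) := japT_le_japT (by positivity) (by nlinarith)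
    _ ≤ japT (a * y) + a * z := japT_add_le _ (by positivity)
    _ ≤ japT (b * y) + d * z :=
        add_le_add (japT_le_japT (by positivity) (by nlinarith)) (by nlinarith)
    _ < japT (b * y) + japT (d * z) := by linarith [lt_japT (d * z)]

lemma eq_of_speed_eq {a p q : ℝ} (ha : 0 < a) (hp : 0 ≤ p) (hq : 0 ≤ q)
    (h : a ^ 2 * p / japT (a * p) = a ^ 2 * q / japT (a * q)) : p = q := by
  rw [div_eq_div_iff (japT_pos _).ne' (japT_pos _).ne'] at h
  have h' : p * japT (a * q) = q * japT (a * p) :=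
    mul_left_cancel₀ (pow_ne_zero 2 ha.ne') (by linarith)
  have hsq : p ^ 2 = q ^ 2 := by
    have := congrArg (· ^ 2) h'
    simp only [mul_pow, sq_japT] at this
    linear_combination this
  exact (sq_eq_sq₀ hp hq).1 hsq

lemma one_sub_mul_lt_one_of_speed_eq {c p q : ℝ} (hc0 : 0 < c) (hc1 : c < 1) (hp : 0 ≤ p)
    (h : p / japT p = c ^ 2 * q / japT (c * q)) : (1 - c) * p < 1 := by
  have hslow : c ^ 2 * q / japT (c * q) < c := by
    rw [div_lt_iff₀ (japT_pos _)]
    nlinarith [lt_japT (c * q)]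
  have hlt : p < c * japT p := (div_lt_iff₀ (japT_pos p)).1 (h ▸ hslow)
  have hsq : p ^ 2 < c ^ 2 * (1 + p ^ 2) := by
    rw [← sq_japT, ← mul_pow]; exact pow_lt_pow_left₀ hlt hp two_ne_zero
  have hsq' : ((1 - c) * p) ^ 2 < 1 := by nlinarith [mul_nonneg (sq_nonneg p) hc0.le]
  nlinarith

lemma mul_one_sub_mul_le {c x : ℝ} (hc1 : c ≤ 1) (hx : 0 ≤ x) :
    c * (1 - c) * x ≤ (1 - c) * x := by
  rw [mul_assoc]
  exact mul_le_of_le_one_left (mul_nonneg (by linarith) hx) hc1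

lemma bound_of_japT_sum_eq {c k l m p q : ℝ} (hc0 : 0 < c) (hc1 : c < 1)
    (hk : k = 1 ∨ k = c) (hl : l = 1 ∨ l = c) (hm : m = 1 ∨ m = c) (hp : 0 ≤ p) (hq : 0 ≤ q)
    (hv : l ^ 2 * p / japT (l * p) = m ^ 2 * q / japT (m * q))
    (hφ : japT (k * (p + q)) = japT (l * p) + japT (m * q)) :
    c * (1 - c) * p ≤ 2 ∧ c * (1 - c) * q ≤ 2 := by
  have hl0 : 0 < l := by rcases hl with rfl | rfl <;> positivity
  have hm0 : 0 < m := by rcases hm with rfl | rfl <;> positivity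
  have hp' := mul_one_sub_mul_le hc1.le hp
  have hq' := mul_one_sub_mul_le hc1.le hq
  obtain hk | hk := hk <;> subst k
  swap
  · exact absurd hφ (japT_mul_lt_add hc0.le (by grind) (by grind) (by positivity) hp hq le_rfl).ne
  have hsum : (1 - l) * p + (1 - m) * q < 2 := by
    have := lt_japT (1 * (p + q))
    have := japT_le_one_add (mul_nonneg hl0.le hp)
    have := japT_le_one_add (mul_nonneg hm0.le hq)
    linarith
  obtain hl | hl := hl <;> obtain hm | hm := hm <;> subst l m
  · exact absurd hφ (japT_mul_lt_add zero_le_one le_rfl le_rfl (by positivity) hp hq le_rfl).ne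
  · simp only [one_pow, one_mul] at hv
    have := one_sub_mul_lt_one_of_speed_eq hc0 hc1 hp hv
    constructor <;> nlinarith
  · simp only [one_pow, one_mul] at hv
    have := one_sub_mul_lt_one_of_speed_eq hc0 hc1 hq hv.symm
    constructor <;> nlinarith
  · constructor <;> nlinarith

lemma bound_of_japT_eq_add {c k l m p q r : ℝ} (hc0 : 0 < c) (hc1 : c < 1)
    (hk : k = 1 ∨ k = c) (hl : l = 1 ∨ l = c) (hm : m = 1 ∨ m = c)
    (hp : 0 ≤ p) (hq : 0 ≤ q) (hr : 0 ≤ r) (hqrp : q ≤ r + p)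
    (hv : l ^ 2 * p / japT (l * p) = m ^ 2 * q / japT (m * q))
    (hφ : japT (m * q) = japT (k * r) + japT (l * p)) :
    c * (1 - c) * p ≤ 2 ∧ c * (1 - c) * q ≤ 2 := by
  obtain hm | hm := hm <;> subst m
  swap
  · exact absurd hφ (japT_mul_lt_add hc0.le (by grind) (by grind) hq hr hp hqrp).ne
  obtain hl | hl := hl <;> subst l
  · obtain rfl := eq_of_speed_eq one_pos hp hq hv
    linarith [one_le_japT (k * r)]
  · simp only [one_pow, one_mul] at hv hφ
    have hq' := one_sub_mul_lt_one_of_speed_eq hc0 hc1 hq hv.symm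
    have hp' : c * p < q := by
      linarith [lt_japT (c * p), one_le_japT (k * r), japT_le_one_add hq]
    constructor <;> nlinarith [mul_one_sub_mul_le hc1.le hp, mul_one_sub_mul_le hc1.le hq]

lemma bound_of_scalar_resonance {c k l m e₁ e₂ p q r : ℝ} (hc0 : 0 < c) (hc1 : c < 1)
    (he₁ : e₁ = 1 ∨ e₁ = -1) (he₂ : e₂ = 1 ∨ e₂ = -1)
    (hk : k = 1 ∨ k = c) (hl : l = 1 ∨ l = c) (hm : m = 1 ∨ m = c)
    (hp : 0 ≤ p) (hq : 0 ≤ q) (hr : 0 ≤ r) (hprq : p ≤ r + q) (hqrp : q ≤ r + p)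
    (hsame : e₁ = e₂ → r = p + q)
    (hv : l ^ 2 * p / japT (l * p) = m ^ 2 * q / japT (m * q))
    (hφ : japT (k * r) + e₁ * japT (l * p) + e₂ * japT (m * q) = 0) :
    c * (1 - c) * p ≤ 2 ∧ c * (1 - c) * q ≤ 2 := by
  obtain rfl | rfl := he₁ <;> obtain rfl | rfl := he₂
  · linarith [japT_pos (k * r), japT_pos (l * p), japT_pos (m * q)]
  · exact bound_of_japT_eq_add hc0 hc1 hk hl hm hp hq hr hqrp hv (by linarith)
  · exact (bound_of_japT_eq_add hc0 hc1 hk hm hl hq hp hr hprq hv.symm (by linarith)).symm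
  · rw [hsame rfl] at hφ
    exact bound_of_japT_sum_eq hc0 hc1 hk hl hm hp hq hv (by linarith)

def groupVelocity (a : ℝ) (x : E3) : E3 := (a ^ 2 / jap a x) • x

lemma jap_pos (a : ℝ) (x : E3) : 0 < jap a x := jap_eq_japT a x ▸ japT_pos _

lemma norm_groupVelocity (a : ℝ) (x : E3) :
    ‖groupVelocity a x‖ = a ^ 2 * ‖x‖ / japT (a * ‖x‖) := by
  rw [groupVelocity, norm_smul, Real.norm_of_nonneg (div_nonneg (sq_nonneg a) (jap_pos a x).le),
    jap_eq_japT, div_mul_eq_mul_div]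

lemma sameRay_of_groupVelocity_eq {a b : ℝ} (ha : 0 < a) (hb : 0 < b) {x y : E3}
    (h : groupVelocity a x = groupVelocity b y) : SameRay ℝ x y :=
  Or.inr <| Or.inr ⟨_, _, div_pos (by positivity) (jap_pos a x),
    div_pos (by positivity) (jap_pos b y), h⟩

lemma hasFDerivAt_jap (a : ℝ) (x : E3) :
    HasFDerivAt (jap a) (innerSL ℝ (groupVelocity a x)) x := by
  have h := (((hasStrictFDerivAt_norm_sq x).hasFDerivAt.const_mul (a ^ 2)).const_add 1).sqrt
    (by positivity : (1 + a ^ 2 * ‖x‖ ^ 2) ≠ 0)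
  refine h.congr_fderiv ?_
  ext y
  have hx := (jap_pos a x).ne'
  rw [jap] at hx
  simp only [groupVelocity, jap, innerSL_apply_apply, real_inner_smul_left,
    smul_apply, smul_eq_mul, nsmul_eq_mul]
  field_simp
  ring

lemma hasFDerivAt_phase (k l m e₁ e₂ : ℝ) (ξ η : E3) :
    HasFDerivAt (phase k l m e₁ e₂ ξ)
      (innerSL ℝ (e₁ • groupVelocity l η - e₂ • groupVelocity m (ξ - η))) η := by
  have h₂ := (hasFDerivAt_jap m (ξ - η)).comp η ((hasFDerivAt_id η).const_sub ξ)
  have h := (((hasFDerivAt_jap l η).const_mul e₁).add (h₂.const_mul e₂)).const_add (jap k ξ)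
  refine (h.congr_fderiv ?_).congr_of_eventuallyEq (.of_forall fun _ => ?_)
  · ext y
    simp only [ContinuousLinearMap.comp_neg, ContinuousLinearMap.comp_id, smul_neg, add_apply,
      smul_apply, coe_innerSL_apply, smul_eq_mul, neg_apply, map_sub, map_smul, sub_apply]
    ring
  · simp only [phase, add_assoc, Function.comp_apply, Pi.add_apply]

lemma fderiv_phase_eq_zero_iff (k l m e₁ e₂ : ℝ) (ξ η : E3) :
    fderiv ℝ (fun η => phase k l m e₁ e₂ ξ η) η = 0 ↔
      e₁ • groupVelocity l η = e₂ • groupVelocity m (ξ - η) := by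
  rw [(hasFDerivAt_phase k l m e₁ e₂ ξ η).fderiv, ← norm_eq_zero, innerSL_apply_norm,
    norm_eq_zero, sub_eq_zero]

lemma norm_le_of_mem_resSet {c : ℝ} (hc0 : 0 < c) (hc1 : c < 1) {ξ η : E3}
    (h : (ξ, η) ∈ ResSet c) : c * (1 - c) * ‖η‖ ≤ 2 ∧ c * (1 - c) * ‖ξ - η‖ ≤ 2 := by
  obtain ⟨e₁, e₂, k, l, m, he₁, he₂, hk, hl, hm, hφ, hgrad⟩ := h
  rw [fderiv_phase_eq_zero_iff] at hgrad
  have habs₁ : |e₁| = 1 := by rcases he₁ with rfl | rfl <;> norm_num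
  have habs₂ : |e₂| = 1 := by rcases he₂ with rfl | rfl <;> norm_num
  have hv : l ^ 2 * ‖η‖ / japT (l * ‖η‖) = m ^ 2 * ‖ξ - η‖ / japT (m * ‖ξ - η‖) := by
    simpa [norm_smul, habs₁, habs₂, norm_groupVelocity] using congrArg norm hgrad
  have hsame : e₁ = e₂ → ‖ξ‖ = ‖η‖ + ‖ξ - η‖ := by
    rintro rfl
    have hl0 : 0 < l := by rcases hl with rfl | rfl <;> positivity
    have hm0 : 0 < m := by rcases hm with rfl | rfl <;> positivity
    have he₁0 : e₁ ≠ 0 := by rcases he₁ with rfl | rfl <;> norm_num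
    simpa using (sameRay_of_groupVelocity_eq hl0 hm0 (smul_right_injective E3 he₁0 hgrad)).norm_add
  refine bound_of_scalar_resonance hc0 hc1 he₁ he₂ hk hl hm (norm_nonneg _) (norm_nonneg _)
    (norm_nonneg _) ?_ (norm_sub_le ξ η) hsame hv (by simpa [phase, jap_eq_japT] using hφ)
  simpa using norm_sub_le ξ (ξ - η)

lemma resSet_subset_closedBall {c : ℝ} (hc0 : 0 < c) (hc1 : c < 1) :
    ResSet c ⊆ Metric.closedBall 0 (4 / (c * (1 - c))) := by
  rintro ⟨ξ, η⟩ h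
  obtain ⟨hη, hξη⟩ := norm_le_of_mem_resSet hc0 hc1 h
  have hξ : ‖ξ‖ ≤ ‖η‖ + ‖ξ - η‖ := by simpa using norm_add_le η (ξ - η)
  have hc : 0 < c * (1 - c) := mul_pos hc0 (by linarith)
  rw [mem_closedBall_zero_iff, Prod.norm_def]
  refine max_le ((le_div_iff₀' hc).2 ?_) ((le_div_iff₀' hc).2 ?_)
  · nlinarith
  · nlinarith [norm_nonneg (ξ - η)]

@[fun_prop]
lemma continuous_jap (a : ℝ) : Continuous (jap a) := by
  unfold jap; fun_prop

@[fun_prop]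
lemma continuous_groupVelocity (a : ℝ) : Continuous (groupVelocity a) :=
  (continuous_const.div (continuous_jap a) fun x => (jap_pos a x).ne').smul continuous_id

lemma isClosed_resSet (c : ℝ) : IsClosed (ResSet c) := by
  have hfin : ∀ a b : ℝ, ({a, b} : Set ℝ).Finite := fun a b => (Set.finite_singleton b).insert a
  have hres : ResSet c = ⋃ e₁ ∈ ({1, -1} : Set ℝ), ⋃ e₂ ∈ ({1, -1} : Set ℝ),
      ⋃ k ∈ ({1, c} : Set ℝ), ⋃ l ∈ ({1, c} : Set ℝ), ⋃ m ∈ ({1, c} : Set ℝ),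
        {p : E3 × E3 | phase k l m e₁ e₂ p.1 p.2 = 0 ∧
          e₁ • groupVelocity l p.2 = e₂ • groupVelocity m (p.1 - p.2)} := by
    ext p
    simp [ResSet, fderiv_phase_eq_zero_iff]
  rw [hres]
  refine (hfin _ _).isClosed_biUnion fun e₁ _ => (hfin _ _).isClosed_biUnion fun e₂ _ =>
    (hfin _ _).isClosed_biUnion fun k _ => (hfin _ _).isClosed_biUnion fun l _ =>
    (hfin _ _).isClosed_biUnion fun m _ => ?_
  exact (isClosed_eq (by unfold phase; fun_prop) continuous_const).inter
    (isClosed_eq (by fun_prop) (by fun_prop))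

/-- The set of space-time resonances is compact, hence contained in a
ball of radius `C_R - 1`. -/
theorem statement8 (c_s : ℝ) (hc0 : 0 < c_s) (hc1 : c_s < 1) :
    IsCompact (ResSet c_s) ∧
      ∃ C_R : ℝ, 1 < C_R ∧ ResSet c_s ⊆ Metric.ball 0 (C_R - 1) := by
  have hR : 0 ≤ 4 / (c_s * (1 - c_s)) := div_nonneg (by norm_num) (by nlinarith)
  have hsub := resSet_subset_closedBall hc0 hc1
  refine ⟨(isCompact_closedBall _ _).of_isClosed_subset (isClosed_resSet c_s) hsub,
    4 / (c_s * (1 - c_s)) + 2, by linarith, hsub.trans (Metric.closedBall_subset_ball ?_)⟩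
  linarith
end
end
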